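/- The patterns 321, 213, and 132 are pairwise even-Wilf-equivalent: for all n ≥ 0, eav_n(321) = eav_n(213) = eav_n(132). -/

import Mathlib

/-- A permutation `π` contains the pattern `σ` if some subsequence of `π`
(given by a strictly increasing choice of indices) is order-isomorphic to `σ`. -/
def Pattern.Contains {k n : ℕ} (σ : Equiv.Perm (Fin k)) (π : Equiv.Perm (Fin n)) : Prop :=
  ∃ f : Fin k → Fin n, StrictMono f ∧ ∀ a b : Fin k, π (f a) < π (f b) ↔ σ a < σ b

/-- `π` avoids the pattern `σ`. -/
def Pattern.Avoids {k n : ℕ} (σ : Equiv.Perm (Fin k)) (π : Equiv.Perm (Fin n)) : Prop :=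
  ¬ Pattern.Contains σ π

/-- `eav n σ`: the number of even permutations of length `n` avoiding `σ`. -/
noncomputable def eav (n : ℕ) {k : ℕ} (σ : Equiv.Perm (Fin k)) : ℕ :=
  Nat.card {π : Equiv.Perm (Fin n) // Equiv.Perm.sign π = 1 ∧ Pattern.Avoids σ π}

/-- Even-Wilf-equivalence: the same number of even avoiders of every length. -/
def EvenWilfEquiv {k l : ℕ} (σ : Equiv.Perm (Fin k)) (τ : Equiv.Perm (Fin l)) : Prop :=
  ∀ n : ℕ, eav n σ = eav n τ

/-- The pattern `321` (one-line notation, 1-indexed). -/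
def p321 : Equiv.Perm (Fin 3) :=
  ⟨![2,1,0], ![2,1,0], by decide, by decide⟩

/-- The pattern `213` (one-line notation, 1-indexed). -/
def p213 : Equiv.Perm (Fin 3) :=
  ⟨![1,0,2], ![1,0,2], by decide, by decide⟩

/-- The pattern `132` (one-line notation, 1-indexed). -/
def p132 : Equiv.Perm (Fin 3) :=
  ⟨![0,2,1], ![0,2,1], by decide, by decide⟩

/-!
213 and 132 are exchanged by the reverse-complement `π ↦ w₀ π w₀` (`w₀ = Fin.revPerm`), which
preserves the sign and pattern containment.

For 321 and 132, `2 · eav_n(σ)` is the number of σ-avoiders plus their signed sum, so it suffices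
to compare `∑ χ (sign π)` over the avoiders for every character `χ : ℤˣ →* ℤ`. Split a
permutation into its first value `a` and the pattern `σ` of the rest, so that
`sign = (-1)^a · sign σ`. It avoids 132 iff `σ` does and the values `≥ a` of `σ` increase; it
avoids 321 iff `σ` does and the values `< a` of `σ` increase. Refining the counts by such
thresholds `t` gives, with `ε = χ (-1) = ±1`, the recurrences
`A (n+1) t = ∑_{a ≤ min t n} ε^a A n a` and
`B (n+1) t = ∑_{t ≤ a ≤ n} ε^a B n a + [0 < t] B n (t-1)`,
and induction on `n` gives `B n t = A n (n - t)`. Reflecting the sum in `B` costs a factor `ε^n`;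
for `ε = -1` it is absorbed by the parity identities `A n k = 0` (`n` even, `k` odd) and
`A n k = A n (k - 1)` (`n` odd, `k` odd).
-/

open Equiv Finset

theorem Fin.exists_lt_succ_iff {n : ℕ} {P : Fin (n + 1) → Fin (n + 1) → Prop} :
    (∃ i j, i < j ∧ P i j) ↔
      (∃ j : Fin n, P 0 j.succ) ∨ ∃ i j : Fin n, i < j ∧ P i.succ j.succ := by
  simp [Fin.exists_fin_succ, Fin.succ_pos]

theorem Fin.exists_lt_lt_succ_iff {n : ℕ}
    {P : Fin (n + 1) → Fin (n + 1) → Fin (n + 1) → Prop} :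
    (∃ i j k, i < j ∧ j < k ∧ P i j k) ↔
      (∃ j k : Fin n, j < k ∧ P 0 j.succ k.succ) ∨
        ∃ i j k : Fin n, i < j ∧ j < k ∧ P i.succ j.succ k.succ := by
  simp [Fin.exists_fin_succ, Fin.succ_pos]

theorem Fin.val_succAbove {n : ℕ} (a : Fin (n + 1)) (i : Fin n) :
    (a.succAbove i : ℕ) = if (i : ℕ) < a then (i : ℕ) else (i : ℕ) + 1 := by
  rw [Fin.succAbove]
  split_ifs <;> simp_all [Fin.lt_def]

namespace Pattern

theorem contains_iff_exists_strictMono {k n : ℕ} (σ : Perm (Fin k)) (π : Perm (Fin n)) :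
    Contains σ π ↔
      ∃ f : Fin k → Fin n, StrictMono f ∧ StrictMono (π ∘ f ∘ σ.symm) :=
  exists_congr fun _ => and_congr_right fun _ =>
    ⟨fun h x y hxy => by simpa [h] using hxy,
      fun h a b => by simpa using h.lt_iff_lt (a := σ a) (b := σ b)⟩

theorem contains_iff_exists_lt_lt {n : ℕ} (σ : Perm (Fin 3)) (π : Perm (Fin n)) :
    Contains σ π ↔
      ∃ i j k, i < j ∧ j < k ∧ StrictMono (π ∘ ![i, j, k] ∘ σ.symm) := by
  simp only [contains_iff_exists_strictMono, Fin.exists_fin_succ_pi, Fin.exists_fin_zero_pi,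
    Fin.strictMono_iff_lt_succ (f := Fin.cons _ _)]
  simp [Fin.forall_fin_succ, and_assoc]
  rfl

theorem contains_p132_iff {n : ℕ} (π : Perm (Fin n)) :
    Contains p132 π ↔ ∃ i j k, i < j ∧ j < k ∧ π i < π k ∧ π k < π j := by
  simp [contains_iff_exists_lt_lt, Fin.strictMono_iff_lt_succ, p132]

theorem contains_p321_iff {n : ℕ} (π : Perm (Fin n)) :
    Contains p321 π ↔ ∃ i j k, i < j ∧ j < k ∧ π k < π j ∧ π j < π i := by
  simp [contains_iff_exists_lt_lt, Fin.strictMono_iff_lt_succ, p321]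

theorem avoids_of_lt {k n : ℕ} (σ : Perm (Fin k)) (π : Perm (Fin n)) (h : n < k) :
    Avoids σ π := fun ⟨f, hf, _⟩ => by
  have := Fintype.card_le_of_injective f hf.injective
  simp only [Fintype.card_fin] at this
  omega

theorem conj_revPerm_apply {n : ℕ} (π : Perm (Fin n)) (x : Fin n) :
    MulAut.conj Fin.revPerm π x = (π x.rev).rev := by
  simp [MulAut.conj_apply, Perm.mul_apply, Perm.inv_def]

theorem conj_revPerm_conj_revPerm {n : ℕ} (π : Perm (Fin n)) :
    MulAut.conj Fin.revPerm (MulAut.conj Fin.revPerm π) = π := by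
  ext x; simp

theorem sign_conj_revPerm {n : ℕ} (π : Perm (Fin n)) :
    Perm.sign (MulAut.conj Fin.revPerm π) = Perm.sign π := by
  rw [MulAut.conj_apply, map_mul, map_mul, Perm.sign_inv, mul_right_comm, Int.units_mul_self,
    one_mul]

theorem Contains.conj_revPerm {k n : ℕ} {σ : Perm (Fin k)} {π : Perm (Fin n)}
    (h : Contains σ π) : Contains (MulAut.conj Fin.revPerm σ) (MulAut.conj Fin.revPerm π) := by
  obtain ⟨f, hf, hfσ⟩ := h
  refine ⟨Fin.rev ∘ f ∘ Fin.rev, fun a b hab => by simpa using hf (Fin.rev_lt_rev.2 hab),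
    fun a b => ?_⟩
  simpa [conj_revPerm_apply] using hfσ b.rev a.rev

theorem contains_conj_revPerm_iff {k n : ℕ} (σ : Perm (Fin k)) (π : Perm (Fin n)) :
    Contains (MulAut.conj Fin.revPerm σ) (MulAut.conj Fin.revPerm π) ↔ Contains σ π :=
  ⟨fun h => by simpa only [conj_revPerm_conj_revPerm] using h.conj_revPerm,
    Contains.conj_revPerm⟩

theorem eav_conj_revPerm (n : ℕ) {k : ℕ} (σ : Perm (Fin k)) :
    eav n (MulAut.conj Fin.revPerm σ) = eav n σ := by
  refine Nat.card_congr ((MulAut.conj Fin.revPerm).toEquiv.subtypeEquiv fun π => ?_)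
  rw [MulEquiv.toEquiv_eq_coe, MulEquiv.coe_toEquiv, Avoids, Avoids, sign_conj_revPerm,
    ← contains_conj_revPerm_iff (MulAut.conj Fin.revPerm σ), conj_revPerm_conj_revPerm]

theorem conj_revPerm_p213 : MulAut.conj Fin.revPerm p213 = p132 := by
  ext x; fin_cases x <;> rfl

def consPerm {n : ℕ} (a : Fin (n + 1)) (σ : Perm (Fin n)) : Perm (Fin (n + 1)) :=
  a.cycleRange⁻¹ * Perm.decomposeFin.symm (0, σ)

@[simp] theorem consPerm_zero {n : ℕ} (a : Fin (n + 1)) (σ : Perm (Fin n)) :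
    consPerm a σ 0 = a := by
  simp [consPerm, Perm.mul_apply, Perm.inv_def]

@[simp] theorem consPerm_succ {n : ℕ} (a : Fin (n + 1)) (σ : Perm (Fin n)) (i : Fin n) :
    consPerm a σ i.succ = a.succAbove (σ i) := by
  simp [consPerm, Perm.mul_apply, Perm.inv_def]

theorem sign_consPerm {n : ℕ} (a : Fin (n + 1)) (σ : Perm (Fin n)) :
    Perm.sign (consPerm a σ) = (-1) ^ (a : ℕ) * Perm.sign σ := by
  simp [consPerm]

theorem consPerm_injective (n : ℕ) :
    Function.Injective fun p : Fin (n + 1) × Perm (Fin n) => consPerm p.1 p.2 := by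
  rintro ⟨a, σ⟩ ⟨b, τ⟩ h
  have hab : a = b := by simpa using congr($h 0)
  subst hab
  refine Prod.ext rfl (Equiv.ext fun i => Fin.succAbove_right_injective (p := a) ?_)
  simpa using congr($h i.succ)

noncomputable def consPermEquiv (n : ℕ) : Fin (n + 1) × Perm (Fin n) ≃ Perm (Fin (n + 1)) :=
  .ofBijective _ <| (Fintype.bijective_iff_injective_and_card _).2
    ⟨consPerm_injective n, by simp [Fintype.card_perm, Nat.factorial_succ]⟩

/-- The values `≥ t` of `π` occur in increasing order; `NoInversionBelow`: the values `< t`. -/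
def NoInversionAbove {n : ℕ} (π : Perm (Fin n)) (t : ℕ) : Prop :=
  ¬ ∃ i j, i < j ∧ t ≤ (π j : ℕ) ∧ π j < π i

def NoInversionBelow {n : ℕ} (π : Perm (Fin n)) (t : ℕ) : Prop :=
  ¬ ∃ i j, i < j ∧ π j < π i ∧ (π i : ℕ) < t

theorem noInversionAbove_of_le {n t : ℕ} (π : Perm (Fin n)) (h : n ≤ t) :
    NoInversionAbove π t :=
  fun ⟨_, j, _, hj, _⟩ => by have := (π j).isLt; omega

theorem noInversionBelow_zero {n : ℕ} (π : Perm (Fin n)) : NoInversionBelow π 0 :=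
  fun ⟨_, _, _, _, hi⟩ => by omega

theorem avoids_p132_consPerm_iff {n : ℕ} (a : Fin (n + 1)) (σ : Perm (Fin n)) :
    Avoids p132 (consPerm a σ) ↔ Avoids p132 σ ∧ NoInversionAbove σ a := by
  rw [Avoids, contains_p132_iff, Fin.exists_lt_lt_succ_iff, Avoids, contains_p132_iff,
    NoInversionAbove]
  simp only [consPerm_zero, consPerm_succ, Fin.succAbove_lt_succAbove_iff,
    Fin.lt_succAbove_iff_le_castSucc, Fin.le_def, Fin.val_castSucc]
  rw [not_or, and_comm]

theorem avoids_p321_consPerm_iff {n : ℕ} (a : Fin (n + 1)) (σ : Perm (Fin n)) :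
    Avoids p321 (consPerm a σ) ↔ Avoids p321 σ ∧ NoInversionBelow σ a := by
  rw [Avoids, contains_p321_iff, Fin.exists_lt_lt_succ_iff, Avoids, contains_p321_iff,
    NoInversionBelow]
  simp only [consPerm_zero, consPerm_succ, Fin.succAbove_lt_succAbove_iff,
    Fin.succAbove_lt_iff_castSucc_lt]
  simp only [Fin.lt_def (a := Fin.castSucc _), Fin.val_castSucc]
  rw [not_or, and_comm]

theorem noInversionAbove_consPerm_iff {n : ℕ} {a : Fin (n + 1)} {σ : Perm (Fin n)}
    (hσ : NoInversionAbove σ a) (t : ℕ) :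
    NoInversionAbove (consPerm a σ) t ↔ (a : ℕ) ≤ t := by
  rw [NoInversionAbove, Fin.exists_lt_succ_iff]
  simp only [consPerm_zero, consPerm_succ, Fin.succAbove_lt_succAbove_iff,
    Fin.succAbove_lt_iff_castSucc_lt, Fin.lt_def (a := Fin.castSucc _), Fin.val_castSucc,
    Fin.val_succAbove]
  constructor
  · intro h
    by_contra! hta
    have ht : t < n := by omega
    exact h (Or.inl ⟨σ.symm ⟨t, ht⟩, by simp [hta]⟩)
  · rintro hat (⟨j, hj, hja⟩ | ⟨i, j, hij, hj, hji⟩)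
    · rw [if_pos hja] at hj
      omega
    · refine hσ ⟨i, j, hij, ?_, hji⟩
      split_ifs at hj <;> omega

theorem noInversionBelow_consPerm_iff {n : ℕ} {a : Fin (n + 1)} {σ : Perm (Fin n)}
    (hσ : NoInversionBelow σ a) (t : ℕ) :
    NoInversionBelow (consPerm a σ) t ↔
      t ≤ a ∨ (a : ℕ) = 0 ∧ NoInversionBelow σ (t - 1) := by
  rw [NoInversionBelow, NoInversionBelow, Fin.exists_lt_succ_iff]
  simp only [consPerm_zero, consPerm_succ, Fin.succAbove_lt_succAbove_iff,
    Fin.succAbove_lt_iff_castSucc_lt, Fin.lt_def (a := Fin.castSucc _), Fin.val_castSucc,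
    Fin.val_succAbove]
  constructor
  · intro h
    refine or_iff_not_imp_left.2 fun hta => ⟨?_, fun ⟨i, j, hij, hji, hi⟩ => ?_⟩
    · by_contra ha
      exact h (Or.inl ⟨σ.symm ⟨0, by omega⟩, by simp only [Equiv.apply_symm_apply]; omega⟩)
    · exact h (Or.inr ⟨i, j, hij, hji, by split_ifs <;> omega⟩)
  · rintro (hta | ⟨ha, hσ'⟩) (⟨j, hja, hat⟩ | ⟨i, j, hij, hji, hi⟩)
    · omega
    · refine hσ ⟨i, j, hij, hji, ?_⟩
      split_ifs at hi <;> omega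
    · omega
    · refine hσ' ⟨i, j, hij, hji, ?_⟩
      split_ifs at hi <;> omega

theorem avoids_p132_and_noInversionAbove_consPerm_iff {n : ℕ} (a : Fin (n + 1))
    (σ : Perm (Fin n)) (t : ℕ) :
    Avoids p132 (consPerm a σ) ∧ NoInversionAbove (consPerm a σ) t ↔
      (a : ℕ) ≤ t ∧ Avoids p132 σ ∧ NoInversionAbove σ a := by
  rw [avoids_p132_consPerm_iff]
  exact ⟨fun ⟨⟨hσ, ha⟩, ht⟩ => ⟨(noInversionAbove_consPerm_iff ha t).1 ht, hσ, ha⟩,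
    fun ⟨ht, hσ, ha⟩ => ⟨⟨hσ, ha⟩, (noInversionAbove_consPerm_iff ha t).2 ht⟩⟩

theorem avoids_p321_and_noInversionBelow_consPerm_iff {n : ℕ} (a : Fin (n + 1))
    (σ : Perm (Fin n)) (t : ℕ) :
    Avoids p321 (consPerm a σ) ∧ NoInversionBelow (consPerm a σ) t ↔
      t ≤ a ∧ (Avoids p321 σ ∧ NoInversionBelow σ a) ∨
        ((a : ℕ) = 0 ∧ 0 < t) ∧ (Avoids p321 σ ∧ NoInversionBelow σ (t - 1)) := by
  rw [avoids_p321_consPerm_iff]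
  constructor
  · rintro ⟨⟨hσ, ha⟩, ht⟩
    by_cases hta : t ≤ a
    · exact .inl ⟨hta, hσ, ha⟩
    · obtain hta' | ⟨h0, ht'⟩ := (noInversionBelow_consPerm_iff ha t).1 ht
      · exact absurd hta' hta
      · exact .inr ⟨⟨h0, by omega⟩, hσ, ht'⟩
  · rintro (⟨hta, hσ, ha⟩ | ⟨⟨h0, -⟩, hσ, ht'⟩)
    · exact ⟨⟨hσ, ha⟩, (noInversionBelow_consPerm_iff ha t).2 (.inl hta)⟩
    · have ha : NoInversionBelow σ a := by rw [h0]; exact noInversionBelow_zero σ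
      exact ⟨⟨hσ, ha⟩, (noInversionBelow_consPerm_iff ha t).2 (.inr ⟨h0, ht'⟩)⟩

def prefixSum (ε : ℤ) (A : ℕ → ℕ → ℤ) (n k : ℕ) : ℤ :=
  ∑ b ∈ range k, ε ^ b * A n b

theorem prefixSum_succ (ε : ℤ) (A : ℕ → ℕ → ℤ) (n k : ℕ) :
    prefixSum ε A n (k + 1) = prefixSum ε A n k + ε ^ k * A n k :=
  sum_range_succ _ _

section Alternating

variable {A : ℕ → ℕ → ℤ}

theorem prefixSum_neg_one_eq_zero {m : ℕ} (hA : ∀ k ≤ m, Odd k → A m k = A m (k - 1)) :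
    ∀ j ≤ m + 1, Even j → prefixSum (-1) A m j = 0 := by
  rintro j hj ⟨i, rfl⟩
  rw [← two_mul] at hj ⊢
  induction i with
  | zero => simp [prefixSum]
  | succ i ih =>
    have h := hA (2 * i + 1) (by omega) (by simp)
    rw [Nat.add_sub_cancel] at h
    rw [show 2 * (i + 1) = 2 * i + 1 + 1 by ring, prefixSum_succ, prefixSum_succ, ih (by omega),
      h, pow_succ, (even_two_mul i).neg_one_pow]
    ring

theorem parity_of_recurrence (hA : ∀ n t, A (n + 1) t = prefixSum (-1) A n (min t n + 1))
    (n : ℕ) : (Even n → ∀ k ≤ n, Odd k → A n k = 0) ∧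
      (Odd n → ∀ k ≤ n, Odd k → A n k = A n (k - 1)) := by
  induction n with
  | zero => exact ⟨fun _ k hk hodd => absurd hodd (by simp [Nat.le_zero.1 hk]), by simp⟩
  | succ n ih =>
    refine ⟨fun hev k hk hk' => ?_, fun hodd k hk hk' => ?_⟩
    · have hn : Odd n := by simpa [Nat.even_add_one] using hev
      have hkn : k ≤ n := by
        rcases hk.lt_or_eq with h | rfl
        · omega
        · exact absurd hev (by simpa using hk')
      rw [hA, min_eq_left hkn]
      exact prefixSum_neg_one_eq_zero (ih.2 hn) _ (by omega) hk'.add_one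
    · have hn : Even n := by simpa [Nat.odd_add_one] using hodd
      have hk1 : min (k - 1) n + 1 = k := by have := hk'.pos; omega
      rw [hA, hA, hk1]
      rcases hk.lt_or_eq with h | rfl
      · rw [min_eq_left (by omega), prefixSum_succ, ih.1 hn k (by omega) hk', mul_zero, add_zero]
      · rw [min_eq_right (by omega)]

end Alternating

section Reflection

variable {ε : ℤ} {A : ℕ → ℕ → ℤ}

theorem pow_mul_prefixSum (hε : ε = 1 ∨ ε = -1)
    (hA : ∀ n t, A (n + 1) t = prefixSum ε A n (min t n + 1)) (n : ℕ) :
    (∀ k ≤ n, ε ^ n * prefixSum ε A n k + A n k = prefixSum ε A n (k + 1)) ∧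
      ε ^ n * prefixSum ε A n (n + 1) = prefixSum ε A n (n + 1) := by
  rcases hε with rfl | rfl
  · simp [prefixSum_succ, add_comm]
  obtain ⟨hE, hO⟩ := parity_of_recurrence hA n
  rcases Nat.even_or_odd n with hn | hn
  · refine ⟨fun k hk => ?_, by rw [hn.neg_one_pow, one_mul]⟩
    rw [hn.neg_one_pow, one_mul, prefixSum_succ]
    rcases Nat.even_or_odd k with hk' | hk'
    · rw [hk'.neg_one_pow, one_mul]
    · rw [hE hn k hk hk', mul_zero]
  · have hS := prefixSum_neg_one_eq_zero (hO hn)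
    refine ⟨fun k hk => ?_, by rw [hS (n + 1) le_rfl hn.add_one, mul_zero]⟩
    rw [hn.neg_one_pow, prefixSum_succ]
    rcases Nat.even_or_odd k with hk' | hk'
    · rw [hS k (by omega) hk', hk'.neg_one_pow]
      ring
    · obtain ⟨j, rfl⟩ : ∃ j, k = j + 1 := ⟨k - 1, by have := hk'.pos; omega⟩
      have hj : Even j := by simpa [Nat.odd_add_one] using hk'
      rw [prefixSum_succ, hS j (by omega) hj, hO hn (j + 1) hk hk', Nat.add_sub_cancel,
        hj.neg_one_pow, hk'.neg_one_pow]
      ring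

theorem eq_of_recurrences {B : ℕ → ℕ → ℤ} (hε : ε = 1 ∨ ε = -1)
    (hA : ∀ n t, A (n + 1) t = prefixSum ε A n (min t n + 1))
    (hB : ∀ n t, B (n + 1) t =
      ∑ a ∈ Ico t (n + 1), ε ^ a * B n a + if 0 < t then B n (t - 1) else 0)
    (h0 : B 0 0 = A 0 0) : ∀ n t, t ≤ n → B n t = A n (n - t) := by
  have hε2 : ε * ε = 1 := by rcases hε with rfl | rfl <;> norm_num
  intro n
  induction n with
  | zero => intro t ht; rw [Nat.le_zero.1 ht, h0]
  | succ n ih =>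
    intro t ht
    have hpow : ∀ b ≤ n, ε ^ (n - b) = ε ^ n * ε ^ b := by
      intro b hb
      obtain ⟨m, rfl⟩ := Nat.exists_eq_add_of_le' hb
      rw [Nat.add_sub_cancel, pow_add, mul_assoc, ← mul_pow, hε2, one_pow, mul_one]
    have hrefl : ∑ a ∈ Ico t (n + 1), ε ^ a * B n a = ε ^ n * prefixSum ε A n (n + 1 - t) :=
      calc ∑ a ∈ Ico t (n + 1), ε ^ a * B n a
          = ∑ a ∈ Ico t (n + 1), ε ^ (n - (n - a)) * A n (n - a) := by
            refine sum_congr rfl fun a ha => ?_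
            have : a ≤ n := by simp at ha; omega
            rw [ih a this, Nat.sub_sub_self this]
        _ = ∑ b ∈ range (n + 1 - t), ε ^ (n - b) * A n b := by
            rw [sum_Ico_reflect (fun b => ε ^ (n - b) * A n b) t le_rfl, Nat.sub_self,
              range_eq_Ico]
        _ = ε ^ n * prefixSum ε A n (n + 1 - t) := by
            rw [prefixSum, mul_sum]
            exact sum_congr rfl fun b hb => by
              rw [hpow b (by simp at hb; omega), mul_assoc]
    obtain ⟨hkey, htop⟩ := pow_mul_prefixSum hε hA n
    rw [hB, hrefl, hA]
    rcases Nat.eq_zero_or_pos t with rfl | htpos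
    · rw [if_neg (lt_irrefl 0), add_zero, Nat.sub_zero, min_eq_right (by omega), htop]
    · rw [if_pos htpos, ih (t - 1) (by omega), show n - (t - 1) = n + 1 - t by omega,
        min_eq_left (by omega)]
      exact hkey _ (by omega)

end Reflection

open scoped Classical

noncomputable def weightedCount (χ : ℤˣ →* ℤ) {n : ℕ} (P : Perm (Fin n) → Prop) : ℤ :=
  ∑ π, if P π then χ (Perm.sign π) else 0

section WeightedCount

variable (χ : ℤˣ →* ℤ) {n : ℕ}

theorem weightedCount_const_and (p : Prop) [Decidable p] (P : Perm (Fin n) → Prop) :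
    weightedCount χ (fun π => p ∧ P π) = if p then weightedCount χ P else 0 := by
  by_cases hp : p <;> simp [weightedCount, hp]

theorem weightedCount_or {P Q : Perm (Fin n) → Prop} (h : ∀ π, ¬ (P π ∧ Q π)) :
    weightedCount χ (fun π => P π ∨ Q π) = weightedCount χ P + weightedCount χ Q := by
  rw [weightedCount, weightedCount, weightedCount, ← sum_add_distrib]
  refine sum_congr rfl fun π _ => ?_
  by_cases hP : P π <;> by_cases hQ : Q π <;> simp_all

theorem weightedCount_consPerm (P : Perm (Fin (n + 1)) → Prop) :
    weightedCount χ P =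
      ∑ a : Fin (n + 1), χ (-1) ^ (a : ℕ) * weightedCount χ fun σ => P (consPerm a σ) := by
  rw [weightedCount, ← (consPermEquiv n).sum_comp, Fintype.sum_prod_type]
  refine sum_congr rfl fun a _ => ?_
  rw [weightedCount, mul_sum]
  refine sum_congr rfl fun σ _ => ?_
  simp [consPermEquiv, sign_consPerm]

end WeightedCount

section Counts

variable (χ : ℤˣ →* ℤ)

noncomputable def count132 (n t : ℕ) : ℤ :=
  weightedCount χ fun σ : Perm (Fin n) => Avoids p132 σ ∧ NoInversionAbove σ t

noncomputable def count321 (n t : ℕ) : ℤ :=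
  weightedCount χ fun σ : Perm (Fin n) => Avoids p321 σ ∧ NoInversionBelow σ t

theorem count132_succ (n t : ℕ) :
    count132 χ (n + 1) t = prefixSum (χ (-1)) (count132 χ) n (min t n + 1) := by
  have hfiber (a : Fin (n + 1)) : weightedCount χ (fun σ => Avoids p132 (consPerm a σ) ∧
      NoInversionAbove (consPerm a σ) t) = if (a : ℕ) ≤ t then count132 χ n a else 0 := by
    simp_rw [avoids_p132_and_noInversionAbove_consPerm_iff, weightedCount_const_and, count132]
  rw [count132, weightedCount_consPerm]
  simp_rw [hfiber]
  rw [Fin.sum_univ_eq_sum_range (fun a => χ (-1) ^ a * if a ≤ t then count132 χ n a else 0),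
    prefixSum]
  simp_rw [mul_ite, mul_zero]
  rw [← sum_filter]
  congr 1
  ext a
  simp only [mem_filter, mem_range]
  omega

theorem count321_succ (n t : ℕ) :
    count321 χ (n + 1) t = ∑ a ∈ Ico t (n + 1), χ (-1) ^ a * count321 χ n a +
      if 0 < t then count321 χ n (t - 1) else 0 := by
  have hfiber (a : Fin (n + 1)) : weightedCount χ (fun σ => Avoids p321 (consPerm a σ) ∧
      NoInversionBelow (consPerm a σ) t) = (if t ≤ a then count321 χ n a else 0) +
        if (a : ℕ) = 0 ∧ 0 < t then count321 χ n (t - 1) else 0 := by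
    simp_rw [avoids_p321_and_noInversionBelow_consPerm_iff]
    rw [weightedCount_or _ fun σ h => by omega, weightedCount_const_and,
      weightedCount_const_and, count321, count321]
  rw [count321, weightedCount_consPerm]
  simp_rw [hfiber]
  rw [Fin.sum_univ_eq_sum_range (fun a => χ (-1) ^ a * ((if t ≤ a then count321 χ n a else 0) +
    if a = 0 ∧ 0 < t then count321 χ n (t - 1) else 0))]
  simp_rw [mul_add, sum_add_distrib, mul_ite, mul_zero, ite_and]
  rw [sum_ite_eq' _ 0, if_pos (by simp), pow_zero, one_mul, ← sum_filter]
  congr 2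
  ext a
  simp only [mem_filter, mem_range, mem_Ico]
  omega

end Counts

theorem weightedCount_avoids_p321 (χ : ℤˣ →* ℤ) (n : ℕ) :
    weightedCount χ (Avoids p321 : Perm (Fin n) → Prop) =
      weightedCount χ (Avoids p132 : Perm (Fin n) → Prop) := by
  have hε : χ (-1) = 1 ∨ χ (-1) = -1 :=
    Int.eq_one_or_neg_one_of_mul_eq_one (by rw [← map_mul, Int.units_mul_self, map_one])
  have h0 : count321 χ 0 0 = count132 χ 0 0 := by
    have hσ (σ : Perm (Fin 0)) :
        Avoids p321 σ ∧ NoInversionBelow σ 0 ↔ Avoids p132 σ ∧ NoInversionAbove σ 0 :=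
      iff_of_true ⟨avoids_of_lt _ _ (by decide), noInversionBelow_zero σ⟩
        ⟨avoids_of_lt _ _ (by decide), noInversionAbove_of_le σ le_rfl⟩
    simp only [count321, count132, hσ]
  have h := eq_of_recurrences hε (count132_succ χ) (count321_succ χ) h0 n 0 n.zero_le
  rw [Nat.sub_zero, count321, count132] at h
  simpa only [noInversionBelow_zero, noInversionAbove_of_le _ le_rfl, and_true] using h

theorem two_mul_eav (n : ℕ) {k : ℕ} (σ : Perm (Fin k)) :
    2 * (eav n σ : ℤ) = weightedCount 1 (Avoids σ : Perm (Fin n) → Prop) +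
      weightedCount (Units.coeHom ℤ) (Avoids σ : Perm (Fin n) → Prop) := by
  rw [eav, Nat.card_eq_fintype_card, Fintype.card_subtype, card_filter, weightedCount,
    weightedCount, ← sum_add_distrib, Nat.cast_sum, mul_sum]
  refine sum_congr rfl fun π _ => ?_
  rcases Int.units_eq_one_or (Perm.sign π) with h | h <;> by_cases hπ : Avoids σ π <;>
    simp [h, hπ]

theorem eav_eq_of_weightedCount_eq {n k l : ℕ} {σ : Perm (Fin k)} {τ : Perm (Fin l)}
    (h : ∀ χ : ℤˣ →* ℤ, weightedCount χ (Avoids σ : Perm (Fin n) → Prop) =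
      weightedCount χ (Avoids τ : Perm (Fin n) → Prop)) :
    eav n σ = eav n τ := by
  have := two_mul_eav n σ
  rw [h, h, ← two_mul_eav] at this
  omega

end Pattern

/-- The patterns 321, 213, 132 are pairwise even-Wilf-equivalent. -/
theorem stmt8 :
    (∀ n : ℕ, eav n p321 = eav n p213) ∧
      (∀ n : ℕ, eav n p321 = eav n p132) ∧
      (∀ n : ℕ, eav n p213 = eav n p132) := by
  have h321 (n : ℕ) : eav n p321 = eav n p132 :=
    Pattern.eav_eq_of_weightedCount_eq fun χ => Pattern.weightedCount_avoids_p321 χ n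
  have h213 (n : ℕ) : eav n p213 = eav n p132 := by
    rw [← Pattern.conj_revPerm_p213, Pattern.eav_conj_revPerm]
  exact ⟨fun n => (h321 n).trans (h213 n).symm, h321, h213⟩
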